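/- Let n ≥ 2 and let Λ = Φ_{n−1} ∘ Φ_{n−2} ∘ ⋯ ∘ Φ_1 : T_n → T_n. Then Λ(e_1) = −Σ_{j=1}^{n−1} q^{n−2−j} e_j, and Λ(e_i) = q^{n−2} e_{i−1} for every i with 2 ≤ i ≤ n−1. -/

import Mathlib

open scoped BigOperators

set_option maxHeartbeats 1000000
set_option synthInstance.maxHeartbeats 400000

noncomputable section

/-- The ground field `K = ℂ(q)`. -/
abbrev K : Type := RatFunc ℂ

/-- The variable `q` of `K = ℂ(q)`. -/
def q : K := RatFunc.X

/-- `T n` models the `n`-th tensor power of the vector representation of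
`U_q(gl(1|1))`, as functions on binary strings of length `n`. -/
abbrev T (n : ℕ) : Type := (Fin n → Fin 2) → K

/-- The standard basis vector `v_α` of `T n`. -/
def v (n : ℕ) (α : Fin n → Fin 2) : T n := fun β => if β = α then 1 else 0

/-- `v₀^{⊗ n}`, the basis vector of the all-zeroes string. -/
def v0 (n : ℕ) : T n := v n (fun _ => 0)

/-- `w n i` is the basis vector whose string has a single `1` in (1-indexed) position `i`. -/
def w (n i : ℕ) : T n := v n (fun j => if (j : ℕ) + 1 = i then 1 else 0)

/-- `e i = -w_i + q⁻¹ w_{i+1}`. -/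
def e (n i : ℕ) : T n := -(w n i) + q⁻¹ • w n (i + 1)

/-- The `R`-matrix on a pair of strands: entry `Rmat out inp`. -/
def Rmat : Fin 2 × Fin 2 → Fin 2 × Fin 2 → K := fun out inp =>
  if inp = (0, 0) then (if out = (0, 0) then q else 0)
  else if inp = (1, 0) then (if out = (0, 1) then 1 else 0)
  else if inp = (0, 1) then
    (if out = (1, 0) then 1 else if out = (0, 1) then q - q⁻¹ else 0)
  else (if out = (1, 1) then -q⁻¹ else 0)

/-- The `R`-matrix acting at positions `i`, `j` (0-indexed) of `T n`. -/
def PhiAux (n : ℕ) (i j : Fin n) : T n →ₗ[K] T n where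
  toFun f := fun β => ∑ p : Fin 2 × Fin 2,
    Rmat (β i, β j) p * f (Function.update (Function.update β i p.1) j p.2)
  map_add' f g := by
    funext β
    try dsimp only
    simp only [Pi.add_apply]
    rw [← Finset.sum_add_distrib]
    exact Finset.sum_congr rfl fun p _ => by simp [mul_add]
  map_smul' c f := by
    funext β
    try dsimp only
    simp only [Pi.smul_apply, smul_eq_mul, RingHom.id_apply]
    rw [Finset.mul_sum]
    exact Finset.sum_congr rfl fun p _ => by ring

/-- `Phi n t` is the map induced by the braid generator `σ_t` (with `1 ≤ t ≤ n-1`),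
acting through the `R`-matrix at (1-indexed) positions `(t, t+1)`. -/
def Phi (n t : ℕ) : T n →ₗ[K] T n :=
  if h : 0 < t ∧ t < n then PhiAux n ⟨t - 1, by omega⟩ ⟨t, h.2⟩ else 0

/-- The action of `E` on `T n`. -/
def En (n : ℕ) : T n →ₗ[K] T n where
  toFun f := fun β => ∑ i : Fin n,
    if β i = 0 then
      ((-1 : K) ^ (Finset.univ.filter (fun j : Fin n => j < i ∧ β j = 1)).card
        * q⁻¹ ^ (n - 1 - (i : ℕ))) * f (Function.update β i 1)
    else 0
  map_add' f g := by
    funext β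
    try dsimp only
    simp only [Pi.add_apply]
    rw [← Finset.sum_add_distrib]
    refine Finset.sum_congr rfl fun i _ => ?_
    by_cases h : β i = 0 <;> simp [h, mul_add]
  map_smul' c f := by
    funext β
    try dsimp only
    simp only [Pi.smul_apply, smul_eq_mul, RingHom.id_apply]
    rw [Finset.mul_sum]
    refine Finset.sum_congr rfl fun i _ => ?_
    by_cases h : β i = 0 <;> simp [h] <;> ring

/-- The action of `F` on `T n`. -/
def Fn (n : ℕ) : T n →ₗ[K] T n where
  toFun f := fun β => ∑ i : Fin n,
    if β i = 1 then
      ((-1 : K) ^ (Finset.univ.filter (fun j : Fin n => j < i ∧ β j = 1)).card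
        * q ^ (i : ℕ)) * f (Function.update β i 0)
    else 0
  map_add' f g := by
    funext β
    try dsimp only
    simp only [Pi.add_apply]
    rw [← Finset.sum_add_distrib]
    refine Finset.sum_congr rfl fun i _ => ?_
    by_cases h : β i = 1 <;> simp [h, mul_add]
  map_smul' c f := by
    funext β
    try dsimp only
    simp only [Pi.smul_apply, smul_eq_mul, RingHom.id_apply]
    rw [Finset.mul_sum]
    refine Finset.sum_congr rfl fun i _ => ?_
    by_cases h : β i = 1 <;> simp [h] <;> ring

/-- The number of `1`s in a binary string. -/
def wt {n : ℕ} (α : Fin n → Fin 2) : ℕ := (Finset.univ.filter (fun i => α i = 1)).card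

/-- `Tk n k` is the span of the basis vectors with exactly `k` entries equal to `1`. -/
def Tk (n k : ℕ) : Submodule K (T n) :=
  Submodule.span K {f : T n | ∃ α, wt α = k ∧ f = v n α}

/-- `Hk n k` is the space of highest weight vectors of weight `(n-k)ε₁ + kε₂`. -/
def Hk (n k : ℕ) : Submodule K (T n) := LinearMap.ker (En n) ⊓ Tk n k

/-- The bilinear product `m` on `T n`. -/
def mul2 (n : ℕ) (f g : T n) : T n := fun γ =>
  ∑ α : Fin n → Fin 2,
    if (∀ i, α i = 1 → γ i = 1) then
      ((-1 : K) ^ (∑ p ∈ Finset.univ.filter (fun p : Fin n × Fin n => p.1 < p.2),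
          (((fun i => if α i = 1 then 0 else γ i) p.1 : Fin 2) : ℕ) * ((α p.2 : Fin 2) : ℕ)))
        * f α * g (fun i => if α i = 1 then 0 else γ i)
    else 0

/-- The left-iterated product `Ψ(u_1, …, u_k) = m(…m(m(u_1,u_2),u_3)…,u_k)`. -/
def Psi (n : ℕ) : (k : ℕ) → (Fin k → T n) → T n
  | 0, _ => v0 n
  | 1, u => u 0
  | (k + 2), u => mul2 n (Psi n (k + 1) (fun i => u i.castSucc)) (u (Fin.last (k + 1)))

/-- Concatenation (tensor product) `T a ⊗ T b → T (a + b)`. -/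
def conc {a b : ℕ} (f : T a) (g : T b) : T (a + b) := fun γ =>
  f (fun i => γ (Fin.castAdd b i)) * g (fun i => γ (Fin.natAdd a i))

/-- Identification `T a ≃ T b` for `a = b`. -/
def castT {a b : ℕ} (h : a = b) (f : T a) : T b := fun γ => f (fun i => γ (Fin.cast h i))

/-- The block vector `Θ_b = Σ_{r=0}^{b-1} (-1)^r q^{-(b-1-r)} v_{β(r)}`. -/
def Theta (b : ℕ) : T b :=
  ∑ r : Fin b, ((-1 : K) ^ (r : ℕ) * q⁻¹ ^ (b - 1 - (r : ℕ))) •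
    v b (fun i => if i = r then 0 else 1)

/-- The map induced by the braid `λ = σ_{n-1} ⋯ σ_1`. -/
def Lam (n : ℕ) : T n →ₗ[K] T n :=
  ((List.range (n - 1)).map (fun t => Phi n (t + 1))).foldl (fun acc g => g ∘ₗ acc) LinearMap.id

/-- The Vandermonde-type matrix `B(n)`. -/
def B (n : ℕ) : Matrix (Fin n) (Fin n) K :=
  fun i j => q ^ ((i : ℤ) * (n : ℤ) * ((n : ℤ) - 1 - 2 * (j : ℤ)))

/-- `C(n) = B(n)⁻¹`. -/
def Cmat (n : ℕ) : Matrix (Fin n) (Fin n) K := (B n)⁻¹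

/-- A combinatorial string `(a_1, b_1, a_2, b_2, …, b_l, a_{l+1})`. -/
structure GString where
  l : ℕ
  a : Fin (l + 1) → ℕ
  b : Fin l → ℕ

/-- Membership of a string in `S_k` (for strands number `n`). -/
def memSk (n k : ℕ) (s : GString) : Prop :=
  (∀ i, 2 ≤ s.b i) ∧ (∑ i, (s.b i - 1)) = k ∧ ((∑ i, s.a i) + ∑ i, s.b i) = n

/-- The length of the string, computed blockwise. -/
def lenOf : (l : ℕ) → (Fin (l + 1) → ℕ) → (Fin l → ℕ) → ℕ
  | 0, a, _ => a 0
  | (l + 1), a, b => (a 0 + b 0) + lenOf l (fun i => a i.succ) (fun i => b i.succ)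

/-- The concatenation `v₀^{⊗a_1} ⊗ Θ_{b_1} ⊗ ⋯ ⊗ Θ_{b_l} ⊗ v₀^{⊗a_{l+1}}`. -/
def rawphi : (l : ℕ) → (a : Fin (l + 1) → ℕ) → (b : Fin l → ℕ) → T (lenOf l a b)
  | 0, a, _ => v0 (a 0)
  | (l + 1), a, b =>
      conc (conc (v0 (a 0)) (Theta (b 0)))
        (rawphi l (fun i => a i.succ) (fun i => b i.succ))

/-- `φ(s) ∈ T n`, the vector associated to a string `s`. -/
def phi (n : ℕ) (s : GString) : T n :=
  if h : lenOf s.l s.a s.b = n then castT h (rawphi s.l s.a s.b) else 0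

/-!
On the basis vectors `w_i`, `Φ_t` is multiplication by `q` unless `i ∈ {t, t + 1}`, where it
acts by `w_t ↦ w_{t+1}` and `w_{t+1} ↦ w_t + (q - q⁻¹) w_{t+1}`. So for `i ≥ 2` every factor
`Φ_t` of `Λ` with `t ∉ {i - 1, i}` scales `e_i` (or, after step `i`, `e_{i-1}`) by `q`, while
`Φ_{i-1} e_i = e_{i-1} + q e_i` and `Φ_i (e_{i-1} + q e_i) = q e_{i-1}`: `n - 2` factors of `q`.
For `e_1`, `Φ_1 e_1 = q⁻¹ w_1 - q⁻² w_2`, and each further `Φ_k` multiplies the `w_1`-term by `q`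
and carries `w_k` to `w_{k+1}`, ending at `q^{n-3} w_1 - q⁻² w_n`; the right-hand side
telescopes to the same vector.
-/

lemma q_ne_zero : q ≠ 0 := RatFunc.X_ne_zero

lemma q_zpow_mul_inv_pow (a : ℤ) (j : ℕ) : q ^ a * q⁻¹ ^ j = q ^ (a - j) := by
  rw [inv_pow, ← div_eq_mul_inv, ← zpow_natCast, ← zpow_sub₀ q_ne_zero]

theorem Function.update_update_eq_iff {ι α : Type*} [DecidableEq ι] {i j : ι} (hij : i ≠ j)
    {f g : ι → α} {a b : α} :
    Function.update (Function.update f i a) j b = g ↔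
      a = g i ∧ b = g j ∧ ∀ k, k ≠ i → k ≠ j → f k = g k := by
  simp only [Function.update_eq_iff, Function.update_apply]
  grind

section PhiAux

variable {n : ℕ} {i j : Fin n}

lemma PhiAux_v_apply (hij : i ≠ j) (α β : Fin n → Fin 2) :
    PhiAux n i j (v n α) β =
      if ∀ k, k ≠ i → k ≠ j → β k = α k then Rmat (β i, β j) (α i, α j) else 0 := by
  change ∑ p : Fin 2 × Fin 2, Rmat (β i, β j) p *
    v n α (Function.update (Function.update β i p.1) j p.2) = _
  simp only [v, Function.update_update_eq_iff hij, mul_ite, mul_one, mul_zero]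
  rw [Finset.sum_eq_single (α i, α j)] <;> grind

lemma PhiAux_v (hij : i ≠ j) (α : Fin n → Fin 2) :
    PhiAux n i j (v n α) = ∑ p : Fin 2 × Fin 2,
      Rmat p (α i, α j) • v n (Function.update (Function.update α i p.1) j p.2) := by
  funext β
  rw [PhiAux_v_apply hij, Finset.sum_apply, Finset.sum_eq_single (β i, β j)]
  · simp only [Pi.smul_apply, smul_eq_mul, v, eq_comm (a := β), Function.update_update_eq_iff hij]
    grind
  · intro p _ hp
    simp only [Pi.smul_apply, smul_eq_mul, v, eq_comm (a := β), Function.update_update_eq_iff hij]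
    grind
  · simp

variable {α : Fin n → Fin 2}

lemma PhiAux_v_of_zero_zero (hij : i ≠ j) (hi : α i = 0) (hj : α j = 0) :
    PhiAux n i j (v n α) = q • v n α := by
  have hα : Function.update (Function.update α i 0) j 0 = α := by
    simp [Function.update_update_eq_iff hij, hi, hj]
  simp [PhiAux_v hij, hi, hj, Rmat, hα]

lemma PhiAux_v_of_one_zero (hij : i ≠ j) (hi : α i = 1) (hj : α j = 0) :
    PhiAux n i j (v n α) = v n (Function.update (Function.update α i 0) j 1) := by
  simp [PhiAux_v hij, hi, hj, Rmat]

lemma PhiAux_v_of_zero_one (hij : i ≠ j) (hi : α i = 0) (hj : α j = 1) :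
    PhiAux n i j (v n α) =
      v n (Function.update (Function.update α i 1) j 0) + (q - q⁻¹) • v n α := by
  have hα : Function.update (Function.update α i 0) j 1 = α := by
    simp [Function.update_update_eq_iff hij, hi, hj]
  simp [PhiAux_v hij, hi, hj, Rmat, hα, Fintype.sum_prod_type]
  abel

end PhiAux

section Phi

variable {n t : ℕ}

lemma Phi_eq_PhiAux (ht : 0 < t) (htn : t < n) :
    Phi n t = PhiAux n ⟨t - 1, by omega⟩ ⟨t, htn⟩ := dif_pos ⟨ht, htn⟩

lemma Phi_w_of_ne (ht : 0 < t) (htn : t < n) {i : ℕ} (hit : i ≠ t) (hit' : i ≠ t + 1) :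
    Phi n t (w n i) = q • w n i := by
  rw [Phi_eq_PhiAux ht htn, w, PhiAux_v_of_zero_zero (by simp [Fin.ext_iff]; omega)]
    <;> simp <;> omega

lemma Phi_w_self (ht : 0 < t) (htn : t < n) : Phi n t (w n t) = w n (t + 1) := by
  rw [Phi_eq_PhiAux ht htn, w, PhiAux_v_of_one_zero (by simp [Fin.ext_iff]; omega)]
  · congr 1
    funext k
    simp only [Function.update_apply, Fin.ext_iff]
    split_ifs <;> first | rfl | omega
  · simp; omega
  · simp

lemma Phi_w_succ (ht : 0 < t) (htn : t < n) :
    Phi n t (w n (t + 1)) = w n t + (q - q⁻¹) • w n (t + 1) := by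
  rw [Phi_eq_PhiAux ht htn, w, PhiAux_v_of_zero_one (by simp [Fin.ext_iff]; omega)]
  · congr 2
    funext k
    simp only [Function.update_apply, Fin.ext_iff]
    split_ifs <;> first | rfl | omega
  · simp; omega
  · simp

end Phi

section PhiE

variable {n t : ℕ}

lemma Phi_e_of_far (ht : 0 < t) (htn : t < n) {i : ℕ} (h : t + 1 < i ∨ i + 1 < t) :
    Phi n t (e n i) = q • e n i := by
  simp only [e, map_add, map_neg, map_smul, Phi_w_of_ne ht htn (i := i) (by omega) (by omega),
    Phi_w_of_ne ht htn (i := i + 1) (by omega) (by omega)]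
  ext β
  simp only [Pi.add_apply, Pi.neg_apply, Pi.smul_apply, smul_eq_mul]
  field_simp [q_ne_zero]

lemma Phi_e_succ (ht : 0 < t) (htn : t < n) :
    Phi n t (e n (t + 1)) = e n t + q • e n (t + 1) := by
  simp only [e, map_add, map_neg, map_smul, Phi_w_succ ht htn,
    Phi_w_of_ne ht htn (i := t + 1 + 1) (by omega) (by omega)]
  ext β
  simp only [Pi.add_apply, Pi.neg_apply, Pi.smul_apply, smul_eq_mul]
  field_simp [q_ne_zero]
  ring

lemma Phi_succ_e_add_smul_e (ht : 0 < t) (htn : t + 1 < n) :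
    Phi n (t + 1) (e n t + q • e n (t + 1)) = q • e n t := by
  simp only [e, map_add, map_neg, map_smul,
    Phi_w_of_ne (by omega) htn (i := t) (by omega) (by omega), Phi_w_self (by omega) htn,
    Phi_w_succ (by omega) htn]
  ext β
  simp only [Pi.add_apply, Pi.neg_apply, Pi.smul_apply, smul_eq_mul]
  field_simp [q_ne_zero]
  ring

lemma Phi_one_e_one (hn : 2 ≤ n) :
    Phi n 1 (e n 1) = q ^ (-1 : ℤ) • w n 1 - q ^ (-2 : ℤ) • w n 2 := by
  simp only [e, map_add, map_neg, map_smul, Phi_w_self one_pos hn, Phi_w_succ one_pos hn]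
  ext β
  simp only [Pi.add_apply, Pi.neg_apply, Pi.sub_apply, Pi.smul_apply, smul_eq_mul]
  field_simp [q_ne_zero]
  ring

end PhiE

/-- `Φ_k ∘ ⋯ ∘ Φ_1`. -/
def partialLam (n k : ℕ) : T n →ₗ[K] T n :=
  ((List.range k).map (fun t => Phi n (t + 1))).foldl (fun acc g => g ∘ₗ acc) LinearMap.id

section partialLam

variable {n : ℕ}

lemma Lam_eq_partialLam : Lam n = partialLam n (n - 1) := rfl

@[simp]
lemma partialLam_zero : partialLam n 0 = LinearMap.id := rfl

lemma partialLam_succ (k : ℕ) : partialLam n (k + 1) = Phi n (k + 1) ∘ₗ partialLam n k := by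
  rw [partialLam, List.range_succ, List.map_append, List.foldl_append]
  rfl

lemma partialLam_apply_of_Phi_eq_smul {a b : ℕ} (hab : a ≤ b) {x y : T n} {c : K}
    (hy : partialLam n a y = x) (hx : ∀ t, a < t → t ≤ b → Phi n t x = c • x) :
    partialLam n b y = c ^ (b - a) • x := by
  induction b, hab using Nat.le_induction with
  | base => simp [hy]
  | succ b hab ih =>
    rw [partialLam_succ, LinearMap.comp_apply, ih fun t h₁ h₂ ↦ hx t h₁ (by omega), map_smul,
      hx (b + 1) (by omega) le_rfl, smul_smul, Nat.sub_add_comm hab, pow_succ]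

lemma partialLam_apply_e_one (hn : 2 ≤ n) {k : ℕ} (hk : 1 ≤ k) (hkn : k ≤ n - 1) :
    partialLam n k (e n 1) = q ^ ((k : ℤ) - 2) • w n 1 - q ^ (-2 : ℤ) • w n (k + 1) := by
  induction k, hk using Nat.le_induction with
  | base => simp [partialLam_succ, Phi_one_e_one hn]
  | succ k hk ih =>
    rw [partialLam_succ, LinearMap.comp_apply, ih (by omega), map_sub, map_smul, map_smul,
      Phi_w_of_ne (by omega) (by omega) (by omega) (by omega), Phi_w_self (by omega) (by omega),
      smul_smul, ← zpow_add_one₀ q_ne_zero]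
    push_cast
    ring_nf

lemma partialLam_sub_one_apply_e {i : ℕ} (hi : 2 ≤ i) (hin : i ≤ n - 1) :
    partialLam n (n - 1) (e n i) = q ^ (n - 2) • e n (i - 1) := by
  have below : partialLam n (i - 2) (e n i) = q ^ (i - 2) • e n i :=
    partialLam_apply_of_Phi_eq_smul (Nat.zero_le _) rfl fun t ht hti ↦
      Phi_e_of_far ht (by omega) (Or.inl (by omega))
  have cross : partialLam n i (e n i) = q ^ (i - 1) • e n (i - 1) := by
    obtain ⟨m, rfl⟩ : ∃ m, i = m + 2 := ⟨i - 2, by omega⟩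
    rw [Nat.add_sub_cancel] at below
    rw [partialLam_succ, partialLam_succ, LinearMap.comp_apply, LinearMap.comp_apply, below,
      map_smul, Phi_e_succ (by omega) (by omega), map_smul,
      Phi_succ_e_add_smul_e (by omega) (by omega), smul_smul, ← pow_succ]
    rfl
  rw [partialLam_apply_of_Phi_eq_smul hin cross fun t ht htn ↦ ?_, smul_smul, ← pow_add]
  · rw [show n - 1 - i + (i - 1) = n - 2 by omega]
  · rw [map_smul, Phi_e_of_far (by omega) (by omega) (Or.inr (by omega)), smul_comm]

end partialLam

lemma sum_range_inv_pow_smul_e (n m : ℕ) :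
    ∑ j ∈ Finset.range m, q⁻¹ ^ j • e n (j + 1) = q⁻¹ ^ m • w n (m + 1) - w n 1 := by
  have step (j : ℕ) :
      q⁻¹ ^ j • e n (j + 1) = q⁻¹ ^ (j + 1) • w n (j + 1 + 1) - q⁻¹ ^ j • w n (j + 1) := by
    rw [e, smul_add, smul_smul, ← pow_succ, smul_neg]
    abel
  rw [Finset.sum_congr rfl fun j _ ↦ step j,
    Finset.sum_range_sub (fun j ↦ q⁻¹ ^ j • w n (j + 1)), pow_zero, one_smul]

theorem stmt11 (n : ℕ) (hn : 2 ≤ n) :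
    Lam n (e n 1) = -∑ j : Fin (n - 1), q ^ ((n : ℤ) - 2 - (((j : ℕ) : ℤ) + 1)) • e n ((j : ℕ) + 1) ∧
    ∀ i : ℕ, 2 ≤ i → i ≤ n - 1 → Lam n (e n i) = q ^ (n - 2) • e n (i - 1) := by
  refine ⟨?_, fun i hi hin ↦ by rw [Lam_eq_partialLam, partialLam_sub_one_apply_e hi hin]⟩
  have hcoeff (j : ℕ) : q ^ ((n : ℤ) - 2 - ((j : ℤ) + 1)) = q ^ ((n : ℤ) - 3) * q⁻¹ ^ j := by
    rw [q_zpow_mul_inv_pow]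
    ring_nf
  rw [Lam_eq_partialLam, partialLam_apply_e_one hn (by omega) le_rfl,
    Fin.sum_univ_eq_sum_range (fun j ↦ q ^ ((n : ℤ) - 2 - ((j : ℤ) + 1)) • e n (j + 1))]
  simp only [hcoeff, ← smul_smul, ← Finset.smul_sum, sum_range_inv_pow_smul_e]
  have hlast : q ^ ((n : ℤ) - 3) * q⁻¹ ^ (n - 1) = q ^ (-2 : ℤ) := by
    rw [q_zpow_mul_inv_pow]
    congr 1
    omega
  rw [smul_sub, smul_smul, hlast, neg_sub, show ((n - 1 : ℕ) : ℤ) - 2 = n - 3 by omega]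

end
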